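/- arXiv:1908.09544 — 3 statements merged into one kernel-verified Lean document; each statement's English description precedes it below -/
import Mathlib

section
/- Let G be an abelian group, φ : G → G a group endomorphism, H a φ-inert subgroup of G, and k a positive integer. Then the subgroup H' := T_k(φ,H) is also φ-inert. -/
open Filter Topology ENNReal

variable {G : Type*}

/-- The `n`-th partial `φ`-trajectory of a subgroup `H`:
`T_n(φ,H) = H + φ(H) + ... + φ^{n-1}(H)`. -/
noncomputable def traj [AddCommGroup G] (φ : AddMonoid.End G) (H : AddSubgroup G) (n : ℕ) :
    AddSubgroup G :=
  ⨆ i ∈ Finset.range n, H.map (φ ^ i)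

/-- `H` is `φ`-inert if `(H + φ(H))/H` is finite. -/
def IsInert [AddCommGroup G] (φ : AddMonoid.End G) (H : AddSubgroup G) : Prop :=
  Finite (↥(H ⊔ H.map φ) ⧸ H.addSubgroupOf (H ⊔ H.map φ))

/-- The sequence `n ↦ log |T_n(φ,H)/H| / n`. -/
noncomputable def entFun [AddCommGroup G] (φ : AddMonoid.End G) (H : AddSubgroup G) (n : ℕ) : ℝ :=
  Real.log (Nat.card (↥(traj φ H n) ⧸ H.addSubgroupOf (traj φ H n))) / n

/-- The intrinsic entropy of `φ` with respect to `H`: the limit of `entFun φ H`. -/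
noncomputable def entWrt [AddCommGroup G] (φ : AddMonoid.End G) (H : AddSubgroup G) : ℝ :=
  limUnder atTop (entFun φ H)

/-- The intrinsic algebraic entropy of `φ`. -/
noncomputable def intrinsicEnt [AddCommGroup G] (φ : AddMonoid.End G) : ℝ≥0∞ :=
  ⨆ (H : AddSubgroup G) (_ : IsInert φ H), ENNReal.ofReal (entWrt φ H)

/-- The `φ`-trajectory of `H`: `T(φ,H) = ⋃_{n ≥ 1} T_n(φ,H)`. -/
noncomputable def trajAll [AddCommGroup G] (φ : AddMonoid.End G) (H : AddSubgroup G) :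
    AddSubgroup G :=
  ⨆ n : ℕ, traj φ H (n + 1)

section Aux

variable [AddCommGroup G] (φ : AddMonoid.End G) (H : AddSubgroup G)

lemma map_end_one : H.map (1 : AddMonoid.End G) = H := AddSubgroup.map_id H

lemma traj_succ (n : ℕ) : traj φ H (n + 1) = traj φ H n ⊔ H.map (φ ^ n) := by
  rw [traj, traj, Finset.range_add_one, Finset.iSup_insert, sup_comm]

lemma traj_one : traj φ H 1 = H := by
  simp only [traj, Finset.range_one, Finset.mem_singleton, iSup_iSup_eq_left, pow_zero]
  exact AddSubgroup.map_id H

lemma le_traj {i n : ℕ} (h : i < n) : H.map (φ ^ i) ≤ traj φ H n :=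
  le_iSup₂_of_le i (Finset.mem_range.mpr h) le_rfl

lemma traj_mono {m n : ℕ} (h : m ≤ n) : traj φ H m ≤ traj φ H n :=
  iSup₂_le fun i hi => le_traj φ H (lt_of_lt_of_le (Finset.mem_range.mp hi) h)

lemma self_le_traj {n : ℕ} (h : 0 < n) : H ≤ traj φ H n := by
  have := le_traj φ H (i := 0) h
  rwa [pow_zero, map_end_one] at this

lemma map_traj (n : ℕ) : (traj φ H n).map φ = ⨆ i ∈ Finset.range n, H.map (φ ^ (i + 1)) := by
  simp only [traj]
  erw [AddSubgroup.map_iSup]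
  refine iSup_congr fun i => ?_
  erw [AddSubgroup.map_iSup]
  refine iSup_congr fun _ => ?_
  erw [AddSubgroup.map_map, pow_succ']
  rfl

lemma traj_sup_map (k : ℕ) (hk : 0 < k) :
    traj φ H k ⊔ (traj φ H k).map φ = traj φ H (k + 1) := by
  rw [map_traj]
  apply le_antisymm
  · refine sup_le (traj_mono φ H (Nat.le_succ k)) (iSup₂_le fun i hi => ?_)
    exact le_traj φ H (Nat.succ_lt_succ (Finset.mem_range.mp hi))
  · refine iSup₂_le fun i hi => ?_
    rcases i with _ | j
    · rw [pow_zero, map_end_one]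
      exact le_trans (self_le_traj φ H hk) le_sup_left
    · exact le_trans (le_iSup₂_of_le j
        (Finset.mem_range.mpr (Nat.lt_of_succ_lt_succ (Finset.mem_range.mp hi))) le_rfl)
        le_sup_right

lemma relIndex_pow_ne_zero (h0 : H.relIndex (H ⊔ H.map φ) ≠ 0) (n : ℕ) :
    (H.map (φ ^ n)).relIndex (H.map (φ ^ n) ⊔ H.map (φ ^ (n + 1))) ≠ 0 := by
  have hsup : H.map (φ ^ n) ⊔ H.map (φ ^ (n + 1)) = (H ⊔ H.map φ).map (φ ^ n) := by
    erw [AddSubgroup.map_sup, AddSubgroup.map_map, pow_succ]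
    rfl
  erw [hsup, ← AddSubgroup.relIndex_comap]
  intro hzero
  apply h0
  have hle : H ≤ (H.map (φ ^ n)).comap (φ ^ n) := fun x hx =>
    AddSubgroup.mem_comap.mpr (AddSubgroup.mem_map_of_mem _ hx)
  exact Nat.eq_zero_of_zero_dvd (hzero ▸ AddSubgroup.relIndex_dvd_of_le_left _ hle)

lemma relIndex_traj_ne_zero (h0 : H.relIndex (H ⊔ H.map φ) ≠ 0) (n : ℕ) :
    H.relIndex (traj φ H (n + 1)) ≠ 0 := by
  induction n with
  | zero => rw [traj_one]; simp [AddSubgroup.relIndex_self]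
  | succ n ih =>
    have hHT : H ≤ traj φ H (n + 1) := self_le_traj φ H n.succ_pos
    have hTT : traj φ H (n + 1) ≤ traj φ H (n + 2) := traj_mono φ H (Nat.le_succ _)
    rw [← AddSubgroup.relIndex_mul_relIndex H (traj φ H (n + 1)) (traj φ H (n + 2)) hHT hTT]
    refine mul_ne_zero ih ?_
    -- relIndex T_{n+1} T_{n+2} ≠ 0
    have hstep : traj φ H (n + 2) = traj φ H (n + 1) ⊔ H.map (φ ^ (n + 1)) :=
      traj_succ φ H (n + 1)
    rw [hstep, sup_comm, AddSubgroup.relIndex_sup_right]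
    have hKn : H.map (φ ^ n) ≤ traj φ H (n + 1) := le_traj φ H (Nat.lt_succ_self n)
    have hdvd := AddSubgroup.relIndex_dvd_of_le_left (H.map (φ ^ (n + 1))) hKn
    intro hzero
    have hA := relIndex_pow_ne_zero φ H h0 n
    rw [sup_comm, AddSubgroup.relIndex_sup_right] at hA
    exact hA (Nat.eq_zero_of_zero_dvd (hzero ▸ hdvd))

end Aux

/-- If `H` is `φ`-inert and `k ≥ 1`, then `H' = T_k(φ,H)` is `φ`-inert. -/
theorem traj_isInert [AddCommGroup G] (φ : AddMonoid.End G) (H : AddSubgroup G)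
    (hH : IsInert φ H) (k : ℕ) (hk : 0 < k) :
    IsInert φ (traj φ H k) := by
  unfold IsInert at hH ⊢
  have h0 : H.relIndex (H ⊔ H.map φ) ≠ 0 := by
    haveI := hH
    exact AddSubgroup.index_ne_zero_of_finite
  rw [traj_sup_map φ H k hk]
  have hHT : H ≤ traj φ H k := self_le_traj φ H hk
  have hTT : traj φ H k ≤ traj φ H (k + 1) := traj_mono φ H (Nat.le_succ _)
  have hmul := AddSubgroup.relIndex_mul_relIndex H (traj φ H k) (traj φ H (k + 1)) hHT hTT
  have hne : (traj φ H k).relIndex (traj φ H (k + 1)) ≠ 0 := by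
    intro hz
    apply relIndex_traj_ne_zero φ H h0 k
    rw [← hmul, hz, mul_zero]
  exact Nat.finite_of_card_ne_zero hne
end

section
/- Let G be an abelian group, φ : G → G a group endomorphism, K a subgroup of G, and k a positive integer. Set H := T_k(φ,K). Then for every positive integer n one has T_n(φ^k, H) = T_{kn-k+1}(φ, H) = T_{kn}(φ, K). -/
open Filter Topology ENNReal

variable {G : Type*}

section Aux

variable [AddCommGroup G]

lemma map_le_traj (φ : AddMonoid.End G) (H : AddSubgroup G) {i n : ℕ} (h : i < n) :
    H.map (φ ^ i) ≤ traj φ H n :=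
  le_iSup₂ (f := fun i (_ : i ∈ Finset.range n) => H.map (φ ^ i)) i (Finset.mem_range.mpr h)

lemma traj_le {φ : AddMonoid.End G} {H S : AddSubgroup G} {n : ℕ}
    (h : ∀ i < n, H.map (φ ^ i) ≤ S) : traj φ H n ≤ S :=
  iSup₂_le fun i hi => h i (Finset.mem_range.mp hi)

lemma map_map_pow (φ : AddMonoid.End G) (K : AddSubgroup G) (i j : ℕ) :
    (K.map (φ ^ j)).map (φ ^ i) = K.map (φ ^ (i + j)) := by
  refine (AddSubgroup.map_map _ _ _).trans ?_; rw [pow_add]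
  rfl

lemma traj_map_le {φ : AddMonoid.End G} {K S : AddSubgroup G} {k i : ℕ}
    (h : ∀ j < k, K.map (φ ^ (i + j)) ≤ S) : (traj φ K k).map (φ ^ i) ≤ S := by
  refine AddSubgroup.map_le_iff_le_comap.mpr ?_
  refine traj_le fun j hj => ?_
  refine AddSubgroup.map_le_iff_le_comap.mp ?_; rw [map_map_pow]
  exact h j hj

lemma traj_pow_eq_aux1 (φ : AddMonoid.End G) (K : AddSubgroup G) {k : ℕ} (hk : 0 < k)
    {n : ℕ} (hn : 0 < n) : traj (φ ^ k) (traj φ K k) n = traj φ K (k * n) := by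
  refine le_antisymm (traj_le fun i hi => ?_) (traj_le fun m hm => ?_)
  · rw [← pow_mul]
    refine traj_map_le fun j hj => map_le_traj φ K ?_
    calc k * i + j < k * i + k := by omega
    _ ≤ k * n := by rw [← Nat.mul_succ]; exact Nat.mul_le_mul_left k hi
  · have h1 : (K.map (φ ^ (m % k))).map ((φ ^ k) ^ (m / k)) = K.map (φ ^ m) := by
      rw [← pow_mul, map_map_pow, Nat.div_add_mod]
    rw [← h1]
    refine le_trans (AddSubgroup.map_mono (map_le_traj φ K (Nat.mod_lt m hk)))
      (map_le_traj (φ ^ k) (traj φ K k) ?_)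
    exact Nat.div_lt_of_lt_mul (mul_comm k n ▸ hm)

lemma traj_pow_eq_aux2 (φ : AddMonoid.End G) (K : AddSubgroup G) {k : ℕ} (hk : 0 < k)
    {n : ℕ} (hn : 0 < n) : traj φ (traj φ K k) (k * n - k + 1) = traj φ K (k * n) := by
  refine le_antisymm (traj_le fun i hi => ?_) (traj_le fun m hm => ?_)
  · refine traj_map_le fun j hj => map_le_traj φ K ?_
    have hkn : k ≤ k * n := Nat.le_mul_of_pos_right k hn
    omega
  · set j := min m (k - 1) with hj
    have hjk : j < k := by omega
    have hi : m - j < k * n - k + 1 := by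
      have hkn : k ≤ k * n := Nat.le_mul_of_pos_right k hn
      omega
    have h1 : (K.map (φ ^ j)).map (φ ^ (m - j)) = K.map (φ ^ m) := by
      rw [map_map_pow, Nat.sub_add_cancel (by omega)]
    rw [← h1]
    exact le_trans (AddSubgroup.map_mono (map_le_traj φ K hjk))
      (map_le_traj φ (traj φ K k) hi)

end Aux

/-- For `H = T_k(φ,K)` and every `n ≥ 1`:
`T_n(φ^k, H) = T_{kn-k+1}(φ, H) = T_{kn}(φ, K)`. -/
theorem traj_pow_eq [AddCommGroup G] (φ : AddMonoid.End G) (K : AddSubgroup G)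
    (k : ℕ) (hk : 0 < k) (n : ℕ) (hn : 0 < n) :
    traj (φ ^ k) (traj φ K k) n = traj φ (traj φ K k) (k * n - k + 1) ∧
      traj φ (traj φ K k) (k * n - k + 1) = traj φ K (k * n) := by
  exact ⟨(traj_pow_eq_aux1 φ K hk hn).trans (traj_pow_eq_aux2 φ K hk hn).symm,
    traj_pow_eq_aux2 φ K hk hn⟩
end

section
/- Let G = ⊕_{i∈ℕ} ℤ/2ℤ and let β : G → G be the right Bernoulli shift, defined by β(x)_0 = 0 and β(x)_{i+1} = x_i for all i ∈ ℕ. Let H := { x ∈ G : x_i = 0 for all i ≠ 0 } and H' := T_2(β,H). Then ent̃(β², H) = log 2, i.e. the sequence log|T_n(β², H)/H| / n converges to log 2 as n → ∞, and ent̃(β², H') = 2·log 2, i.e. the sequence log|T_n(β², H')/H'| / n converges to 2·log 2 as n → ∞. In particular ent̃(β², H) ≠ ent̃(β², H'), so that for a φ^k-inert subgroup H the equality ent̃(φ^k, H) = ent̃(φ^k, T_k(φ,H)) can fail. -/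
open Filter Topology ENNReal

variable {G : Type*}

/-- subgroup of finsupps supported inside S -/
noncomputable def suppSub (S : Finset ℕ) : AddSubgroup (ℕ →₀ ZMod 2) where
  carrier := {x | ∀ i ∉ S, x i = 0}
  zero_mem' := fun i _ => rfl
  add_mem' := by intro a b ha hb i hi; simp [Finsupp.add_apply, ha i hi, hb i hi]
  neg_mem' := by intro a ha i hi; simp [Finsupp.neg_apply, ha i hi]

lemma mem_suppSub {S : Finset ℕ} {x : ℕ →₀ ZMod 2} : x ∈ suppSub S ↔ ∀ i ∉ S, x i = 0 := Iff.rfl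

lemma suppSub_mono {S S' : Finset ℕ} (h : S ⊆ S') : suppSub S ≤ suppSub S' :=
  fun x hx i hi => hx i (fun hc => hi (h hc))

section B
variable {β : AddMonoid.End (ℕ →₀ ZMod 2)}
  (hβ0 : ∀ x : ℕ →₀ ZMod 2, β x 0 = 0)
  (hβs : ∀ (x : ℕ →₀ ZMod 2) (i : ℕ), β x (i + 1) = x i)

include hβ0 hβs in
lemma bern_pow_apply : ∀ (k : ℕ) (x : ℕ →₀ ZMod 2) (i : ℕ),
    (β ^ k) x i = if k ≤ i then x (i - k) else 0 := by
  intro k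
  induction k with
  | zero => intro x i; simp
  | succ k ih =>
    intro x i
    rw [pow_succ]
    have h1 : (β ^ k * β) x = (β ^ k) (β x) := rfl
    rw [h1, ih (β x) i]
    by_cases hk : k ≤ i
    · rw [if_pos hk]
      by_cases hk1 : k + 1 ≤ i
      · rw [if_pos hk1]
        have h2 : i - k = (i - (k+1)) + 1 := by omega
        rw [h2, hβs]
      · rw [if_neg hk1]
        have h2 : i - k = 0 := by omega
        rw [h2, hβ0]
    · rw [if_neg hk, if_neg (by omega)]

include hβ0 hβs in
lemma pow_single (k m : ℕ) (c : ZMod 2) :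
    (β ^ k) (Finsupp.single m c) = Finsupp.single (m + k) c := by
  ext i
  rw [bern_pow_apply hβ0 hβs]
  rcases Nat.lt_or_ge i k with h | h
  · rw [if_neg (by omega), Finsupp.single_apply, if_neg (by omega)]
  · rw [if_pos h, Finsupp.single_apply, Finsupp.single_apply]
    by_cases he : m = i - k
    · rw [if_pos he, if_pos (by omega)]
    · rw [if_neg he, if_neg (by omega)]

include hβ0 hβs in
lemma traj_pow_eq_s11 (k : ℕ) (S : Finset ℕ) (n : ℕ) :
    traj (β ^ k) (suppSub S) n
      = suppSub ((Finset.range n).biUnion fun i => S.image (· + k * i)) := by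
  apply le_antisymm
  · apply iSup₂_le
    intro i hi
    rw [Finset.mem_range] at hi
    rintro y ⟨x, hx, rfl⟩
    intro j hj
    erw [← pow_mul, bern_pow_apply hβ0 hβs]
    split_ifs with hle
    · by_contra hne
      have hjS : j - k * i ∈ S := by
        by_contra hc
        exact hne (hx _ hc)
      exact hj (Finset.mem_biUnion.2 ⟨i, Finset.mem_range.2 hi,
        Finset.mem_image.2 ⟨j - k * i, hjS, by omega⟩⟩)
    · rfl
  · intro x hx
    rw [← Finsupp.sum_single x, Finsupp.sum]
    apply AddSubgroup.sum_mem
    intro j hj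
    have hjne : x j ≠ 0 := Finsupp.mem_support_iff.1 hj
    have hjB : j ∈ (Finset.range n).biUnion fun i => S.image (· + k * i) := by
      by_contra hc
      exact hjne (hx j hc)
    obtain ⟨i, hi, hji⟩ := Finset.mem_biUnion.1 hjB
    obtain ⟨s, hs, hsj⟩ := Finset.mem_image.1 hji
    have hmem : Finsupp.single j (x j) ∈ (suppSub S).map ((β ^ k) ^ i) := by
      refine ⟨Finsupp.single s (x j), ?_, ?_⟩
      · intro m hm
        rw [Finsupp.single_apply, if_neg (by rintro rfl; exact hm hs)]
      · erw [← pow_mul, pow_single hβ0 hβs, hsj]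
    exact AddSubgroup.mem_iSup_of_mem i (AddSubgroup.mem_iSup_of_mem hi hmem)

end B

lemma card_suppSub (S : Finset ℕ) : Nat.card (suppSub S) = 2 ^ S.card := by
  have e : suppSub S ≃ (S → ZMod 2) :=
    { toFun := fun x i => x.1 i
      invFun := fun f => ⟨Finsupp.onFinset S (fun i => if h : i ∈ S then f ⟨i, h⟩ else 0)
          (fun a ha => by by_contra h; simp [h] at ha),
        fun i hi => by simp [Finsupp.onFinset_apply, hi]⟩
      left_inv := fun x => by
        ext i
        simp only [Finsupp.onFinset_apply]
        split
        · rfl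
        · exact (x.2 i ‹_›).symm
      right_inv := fun f => by ext i; simp [i.2] }
  rw [Nat.card_congr e]
  simp [Nat.card_eq_fintype_card, ZMod.card]

lemma card_quot_of_le {G : Type*} [AddCommGroup G] {K T : AddSubgroup G} (h : K ≤ T) :
    Nat.card T = Nat.card (↥T ⧸ K.addSubgroupOf T) * Nat.card K := by
  rw [AddSubgroup.card_eq_card_quotient_mul_card_addSubgroup (K.addSubgroupOf T)]
  rw [Nat.card_congr (AddSubgroup.addSubgroupOfEquivOfLe h).toEquiv]


/-- Counterexample to `ent̃(φ^k, H) = ent̃(φ^k, T_k(φ,H))`: for the right Bernoulli shift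
`β` on `G = ⊕_{i∈ℕ} ℤ/2ℤ`, `H = {x : x_i = 0 for i ≠ 0}` and `H' = T_2(β,H)`,
one has `ent̃(β², H) = log 2` while `ent̃(β², H') = 2·log 2`; in particular the two
entropy values are distinct. -/
theorem entWrt_bernoulli_counterexample (β : AddMonoid.End (ℕ →₀ ZMod 2))
    (hβ0 : ∀ x : ℕ →₀ ZMod 2, β x 0 = 0)
    (hβs : ∀ (x : ℕ →₀ ZMod 2) (i : ℕ), β x (i + 1) = x i)
    (H : AddSubgroup (ℕ →₀ ZMod 2))
    (hH : ∀ x : ℕ →₀ ZMod 2, x ∈ H ↔ ∀ i : ℕ, i ≠ 0 → x i = 0) :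
    Tendsto (entFun (β ^ 2) H) atTop (𝓝 (Real.log 2)) ∧
      Tendsto (entFun (β ^ 2) (traj β H 2)) atTop (𝓝 (2 * Real.log 2)) ∧
      ¬ ∃ L : ℝ, Tendsto (entFun (β ^ 2) H) atTop (𝓝 L) ∧
        Tendsto (entFun (β ^ 2) (traj β H 2)) atTop (𝓝 L) := by
  classical
  have hHeq : H = suppSub {0} := by
    ext x
    rw [hH x, mem_suppSub]
    constructor
    · intro h i hi; exact h i (by simpa using hi)
    · intro h i hi; exact h i (by simpa using hi)
  -- the first trajectory: even coordinates
  have hB1 : ∀ n : ℕ, (Finset.range n).biUnion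
      (fun i => ({0} : Finset ℕ).image (· + 2 * i)) = (Finset.range n).image (2 * ·) := by
    intro n
    ext j
    simp only [Finset.mem_biUnion, Finset.mem_image, Finset.mem_range, Finset.mem_singleton]
    constructor
    · rintro ⟨i, hi, s, rfl, rfl⟩; exact ⟨i, hi, by omega⟩
    · rintro ⟨i, hi, rfl⟩; exact ⟨i, hi, 0, rfl, by omega⟩
  have htraj1 : ∀ n : ℕ, traj (β ^ 2) H n = suppSub ((Finset.range n).image (2 * ·)) := by
    intro n
    rw [hHeq, traj_pow_eq_s11 hβ0 hβs 2, hB1]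
  have key1 : ∀ n : ℕ, 1 ≤ n →
      Nat.card (↥(traj (β ^ 2) H n) ⧸ H.addSubgroupOf (traj (β ^ 2) H n)) = 2 ^ (n - 1) := by
    intro n hn
    have hle : H ≤ traj (β ^ 2) H n := by
      rw [htraj1, hHeq]
      apply suppSub_mono
      intro j hj
      rw [Finset.mem_singleton] at hj
      subst hj
      exact Finset.mem_image.2 ⟨0, Finset.mem_range.2 (by omega), by omega⟩
    have hcard : Nat.card (traj (β ^ 2) H n) = 2 ^ n := by
      rw [htraj1, card_suppSub,
        Finset.card_image_of_injective _ (fun a b h => by omega), Finset.card_range]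
    have hcardH : Nat.card H = 2 := by
      rw [hHeq, card_suppSub]; simp
    have heq := card_quot_of_le hle
    rw [hcard, hcardH] at heq
    have h2 : (2 : ℕ) ^ n = 2 ^ (n - 1) * 2 := by
      rw [← pow_succ]
      congr 1
      omega
    exact Nat.eq_of_mul_eq_mul_right (by norm_num) (heq.symm.trans h2)
  have t1 : Tendsto (entFun (β ^ 2) H) atTop (𝓝 (Real.log 2)) := by
    have base : Tendsto (fun n : ℕ => (1 - 1 / (n : ℝ)) * Real.log 2) atTop
        (𝓝 (Real.log 2)) := by
      have h := (tendsto_one_div_atTop_nhds_zero_nat.const_sub 1).mul_const (Real.log 2)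
      simpa using h
    apply base.congr'
    filter_upwards [eventually_ge_atTop 1] with n hn
    simp only [entFun, key1 n hn]
    have hn0 : (n : ℝ) ≠ 0 := Nat.cast_ne_zero.2 (by omega)
    push_cast
    rw [Real.log_pow]
    rw [Nat.cast_sub hn]
    push_cast
    field_simp
  -- the second subgroup
  have hH'eq : traj β H 2 = suppSub {0, 1} := by
    rw [hHeq]
    rw [show β = β ^ 1 from (pow_one β).symm, traj_pow_eq_s11 hβ0 hβs 1]
    congr 1
  have hB2 : ∀ n : ℕ, (Finset.range n).biUnion
      (fun i => ({0, 1} : Finset ℕ).image (· + 2 * i)) = Finset.range (2 * n) := by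
    intro n
    ext j
    simp only [Finset.mem_biUnion, Finset.mem_image, Finset.mem_range, Finset.mem_insert,
      Finset.mem_singleton]
    constructor
    · rintro ⟨i, hi, s, hs, rfl⟩; omega
    · intro hj
      refine ⟨j / 2, by omega, j % 2, by omega, by omega⟩
  have htraj2 : ∀ n : ℕ, traj (β ^ 2) (traj β H 2) n = suppSub (Finset.range (2 * n)) := by
    intro n
    rw [hH'eq, traj_pow_eq_s11 hβ0 hβs 2, hB2]
  have key2 : ∀ n : ℕ, 1 ≤ n →
      Nat.card (↥(traj (β ^ 2) (traj β H 2) n) ⧸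
        (traj β H 2).addSubgroupOf (traj (β ^ 2) (traj β H 2) n)) = 2 ^ (2 * n - 2) := by
    intro n hn
    have hle : traj β H 2 ≤ traj (β ^ 2) (traj β H 2) n := by
      rw [htraj2, hH'eq]
      apply suppSub_mono
      intro j hj
      simp only [Finset.mem_insert, Finset.mem_singleton] at hj
      exact Finset.mem_range.2 (by omega)
    have hcard : Nat.card (traj (β ^ 2) (traj β H 2) n) = 2 ^ (2 * n) := by
      rw [htraj2, card_suppSub, Finset.card_range]
    have hcardH : Nat.card (traj β H 2) = 4 := by
      rw [hH'eq, card_suppSub]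
      rfl
    have heq := card_quot_of_le hle
    rw [hcard, hcardH] at heq
    have h2 : (2 : ℕ) ^ (2 * n) = 2 ^ (2 * n - 2) * 4 := by
      have : (4 : ℕ) = 2 ^ 2 := by norm_num
      rw [this, ← pow_add]
      congr 1
      omega
    exact Nat.eq_of_mul_eq_mul_right (by norm_num) (heq.symm.trans h2)
  have t2 : Tendsto (entFun (β ^ 2) (traj β H 2)) atTop (𝓝 (2 * Real.log 2)) := by
    have base : Tendsto (fun n : ℕ => (2 - 2 / (n : ℝ)) * Real.log 2) atTop
        (𝓝 (2 * Real.log 2)) := by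
      have h0 : Tendsto (fun n : ℕ => 2 / (n : ℝ)) atTop (𝓝 0) := by
        have := tendsto_one_div_atTop_nhds_zero_nat.const_mul (2 : ℝ)
        simpa [div_eq_mul_inv, one_div] using this
      have h := (h0.const_sub 2).mul_const (Real.log 2)
      simpa using h
    apply base.congr'
    filter_upwards [eventually_ge_atTop 1] with n hn
    simp only [entFun, key2 n hn]
    have hn0 : (n : ℝ) ≠ 0 := Nat.cast_ne_zero.2 (by omega)
    push_cast
    rw [Real.log_pow]
    rw [Nat.cast_sub (by omega : 2 ≤ 2 * n)]
    push_cast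
    field_simp
  refine ⟨t1, t2, ?_⟩
  rintro ⟨L, h1, h2⟩
  have e1 : L = Real.log 2 := tendsto_nhds_unique h1 t1
  have e2 : L = 2 * Real.log 2 := tendsto_nhds_unique h2 t2
  have hpos : (0 : ℝ) < Real.log 2 := Real.log_pos (by norm_num)
  linarith
end
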